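/- Let f ∈ L²(ℝ) have analytic part f₊ (f̂₊ = 2f̂·1_{ω>0}), let p > 0, and define F(z) = (1/2π) ∫_ℝ ω^p f̂₊(ω) e^{iωz} dω for Im z > 0. Let ψ_j be the Cauchy wavelet with ψ̂_j(ω) = (a^j ω)^p e^{-a^j ω} 1_{ω>0}, a > 1. Then F is holomorphic on the upper half-plane and for every j ∈ ℤ and x ∈ ℝ, (a^{pj}/2) F(x + i a^j) = (f ⋆ ψ_j)(x). -/

import Mathlib

/-!
For `ω > 0` and `Im z > 0` the factor `e^{iωz}` decays like `e^{-ω Im z}`. Since `|f̂| ≤ ‖f‖₁`,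
the integrand of `F` is dominated by `C ω^p e^{-ω Im z}`, locally uniformly in `z`, so `F` may be
differentiated under the integral sign and is holomorphic. For the identity, Fubini shows that
convolving `f` with an inverse Fourier integral `∫ G(ω) e^{iωy} dω` multiplies `f̂` by `G`, and
`ψ̂_j(ω) e^{iωx} = a^{pj} ω^p e^{iω(x + i a^j)}`.
-/

open MeasureTheory Complex Real

noncomputable section

/-- Fourier transform with the convention `f̂(ω) = ∫ f(x) e^{-iωx} dx`. -/
def fourierT (f : ℝ → ℂ) (ω : ℝ) : ℂ :=
  ∫ x : ℝ, f x * Complex.exp (-Complex.I * ω * x)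

/-- Convolution of two functions on `ℝ`. -/
def conv (f g : ℝ → ℂ) (x : ℝ) : ℂ := ∫ t : ℝ, f t * g (x - t)

/-- The holomorphic extension `F(z) = (1/2π) ∫_0^∞ ω^p f̂₊(ω) e^{iωz} dω`, where
`f̂₊(ω) = 2 f̂(ω)` for `ω > 0`. -/
def Fext (p : ℝ) (f : ℝ → ℂ) (z : ℂ) : ℂ :=
  (1 / (2 * (π : ℂ))) * ∫ ω in Set.Ioi (0 : ℝ),
    ((ω ^ p : ℝ) : ℂ) * (2 * fourierT f ω) * Complex.exp (Complex.I * ω * z)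

/-- The Cauchy wavelet `ψ_j` with `ψ̂_j(ω) = (a^j ω)^p e^{-a^j ω} 1_{ω>0}`, obtained by
inverse Fourier transform. -/
def cauchyWavelet (a p : ℝ) (j : ℤ) (x : ℝ) : ℂ :=
  (1 / (2 * (π : ℂ))) * ∫ ω in Set.Ioi (0 : ℝ),
    (((a ^ j * ω) ^ p : ℝ) : ℂ) * (Real.exp (-(a ^ j * ω)) : ℂ) *
      Complex.exp (Complex.I * ω * x)

open Set Topology

lemma norm_cexp_I_mul_ofReal_mul (ω : ℝ) (z : ℂ) :
    ‖cexp (I * ω * z)‖ = Real.exp (-(ω * z.im)) := by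
  simp [Complex.norm_exp, Complex.mul_re]

lemma norm_cexp_neg_I_mul_ofReal_mul_ofReal (ω x : ℝ) : ‖cexp (-I * ω * x)‖ = 1 := by
  simp [Complex.norm_exp]

lemma integrableOn_rpow_mul_exp_neg_mul {s b : ℝ} (hs : -1 < s) (hb : 0 < b) :
    IntegrableOn (fun ω : ℝ => ω ^ s * Real.exp (-(b * ω))) (Ioi 0) := by
  simpa [Real.rpow_one, neg_mul] using integrableOn_rpow_mul_exp_neg_mul_rpow hs one_pos hb

lemma integrableOn_mul_rpow_mul_exp_neg_mul {s b : ℝ} (hs : -1 < s) (hb : 0 < b) :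
    IntegrableOn (fun ω : ℝ => (b * ω) ^ s * Real.exp (-(b * ω))) (Ioi 0) := by
  have := (integrableOn_Ioi_comp_mul_left_iff (fun ω : ℝ => ω ^ s * Real.exp (-ω)) 0 hb).2
  simpa using this (by simpa using integrableOn_rpow_mul_exp_neg_mul hs one_pos)

section Fourier

variable {f : ℝ → ℂ}

lemma norm_fourierT_le (f : ℝ → ℂ) (ω : ℝ) : ‖fourierT f ω‖ ≤ ∫ x, ‖f x‖ :=
  (norm_integral_le_integral_norm _).trans_eq <| by
    simp_rw [norm_mul, norm_cexp_neg_I_mul_ofReal_mul_ofReal, mul_one]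

lemma continuous_fourierT (hf : Integrable f) : Continuous (fourierT f) :=
  continuous_of_dominated
    (fun _ => hf.1.mul (by fun_prop : Continuous _).aestronglyMeasurable)
    (fun ω => .of_forall fun x => by
      rw [norm_mul, norm_cexp_neg_I_mul_ofReal_mul_ofReal, mul_one])
    hf.norm (.of_forall fun _ => by fun_prop)

lemma conv_integral_mul_cexp {μ : Measure ℝ} [SFinite μ] {G : ℝ → ℂ} (hG : Integrable G μ)
    (hf : Integrable f) (x : ℝ) :
    conv f (fun y => ∫ ω, G ω * cexp (I * ω * y) ∂μ) x =
      ∫ ω, G ω * fourierT f ω * cexp (I * ω * x) ∂μ := by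
  set H : ℝ → ℝ → ℂ := fun ω t => G ω * f t * cexp (I * ω * ((x - t : ℝ) : ℂ))
  have hH : Integrable (Function.uncurry H) (μ.prod volume) := by
    refine (hG.mul_prod hf).norm.mono' ?_ (.of_forall fun z => ?_)
    · exact (hG.1.comp_fst.mul hf.1.comp_snd).mul
        (by fun_prop : Continuous _).aestronglyMeasurable
    · simp [H, Function.uncurry, norm_cexp_I_mul_ofReal_mul]
  have hsplit (ω t : ℝ) :
      cexp (I * ω * ((x - t : ℝ) : ℂ)) = cexp (-I * ω * t) * cexp (I * ω * x) := by
    rw [← Complex.exp_add]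
    push_cast
    ring_nf
  calc conv f (fun y => ∫ ω, G ω * cexp (I * ω * y) ∂μ) x
      = ∫ t, (∫ ω, H ω t ∂μ) := by
        unfold conv
        congr 1 with t
        rw [← integral_const_mul]
        congr 1 with ω
        ring
    _ = ∫ ω, (∫ t, H ω t) ∂μ := (integral_integral_swap hH).symm
    _ = ∫ ω, G ω * fourierT f ω * cexp (I * ω * x) ∂μ := by
        congr 1 with ω
        simp only [H, hsplit, fourierT]
        rw [← integral_const_mul, ← integral_mul_const]
        congr 1 with t
        ring

end Fourier

/-- `Fext p f` is definitionally `(2π)⁻¹ * laplaceIoi p (2 * f̂)`. -/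
def laplaceIoi (p : ℝ) (g : ℝ → ℂ) (z : ℂ) : ℂ :=
  ∫ ω in Ioi (0 : ℝ), ((ω ^ p : ℝ) : ℂ) * g ω * cexp (I * ω * z)

section LaplaceIoi

variable {p C b : ℝ} {g : ℝ → ℂ}

lemma norm_laplaceIoi_integrand_le (hg : ∀ ω, ‖g ω‖ ≤ C) {ω : ℝ} (hω : 0 ≤ ω) {z : ℂ}
    (hz : b ≤ z.im) :
    ‖((ω ^ p : ℝ) : ℂ) * g ω * cexp (I * ω * z)‖ ≤ C * (ω ^ p * Real.exp (-(b * ω))) := by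
  have hC : 0 ≤ C := (norm_nonneg _).trans (hg 0)
  rw [norm_mul, norm_mul, norm_cexp_I_mul_ofReal_mul, Complex.norm_real, Real.norm_eq_abs,
    abs_of_nonneg (Real.rpow_nonneg hω p)]
  calc ω ^ p * ‖g ω‖ * Real.exp (-(ω * z.im))
      ≤ ω ^ p * C * Real.exp (-(b * ω)) := by
        gcongr ω ^ p * ?_ * Real.exp ?_
        · exact hg ω
        · nlinarith
    _ = C * (ω ^ p * Real.exp (-(b * ω))) := by ring

lemma aestronglyMeasurable_laplaceIoi_integrand
    (hgm : AEStronglyMeasurable g (volume.restrict (Ioi 0))) (z : ℂ) :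
    AEStronglyMeasurable (fun ω : ℝ => ((ω ^ p : ℝ) : ℂ) * g ω * cexp (I * ω * z))
      (volume.restrict (Ioi 0)) :=
  ((Complex.measurable_ofReal.comp (measurable_id.pow_const p)).aestronglyMeasurable.mul hgm).mul
    (by fun_prop : Continuous fun ω : ℝ => cexp (I * ω * z)).aestronglyMeasurable

lemma integrableOn_laplaceIoi_integrand (hp : -1 < p)
    (hgm : AEStronglyMeasurable g (volume.restrict (Ioi 0))) (hg : ∀ ω, ‖g ω‖ ≤ C) {z : ℂ}
    (hz : 0 < z.im) :
    IntegrableOn (fun ω : ℝ => ((ω ^ p : ℝ) : ℂ) * g ω * cexp (I * ω * z)) (Ioi 0) :=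
  ((integrableOn_rpow_mul_exp_neg_mul hp hz).const_mul C).mono'
    (aestronglyMeasurable_laplaceIoi_integrand hgm z)
    ((ae_restrict_iff' measurableSet_Ioi).2 <| .of_forall fun _ hω =>
      norm_laplaceIoi_integrand_le hg (le_of_lt hω) le_rfl)

lemma differentiableOn_laplaceIoi (hp : -1 < p)
    (hgm : AEStronglyMeasurable g (volume.restrict (Ioi 0))) (hg : ∀ ω, ‖g ω‖ ≤ C) :
    DifferentiableOn ℂ (laplaceIoi p g) {z | 0 < z.im} := by
  intro z₀ (hz₀ : 0 < z₀.im)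
  have hε : 0 < z₀.im / 2 := half_pos hz₀
  have hs : {z : ℂ | z₀.im / 2 < z.im} ∈ 𝓝 z₀ :=
    (isOpen_lt continuous_const Complex.continuous_im).mem_nhds (half_lt_self hz₀)
  refine (hasDerivAt_integral_of_dominated_loc_of_deriv_le hs
    (.of_forall fun z => aestronglyMeasurable_laplaceIoi_integrand hgm z)
    (integrableOn_laplaceIoi_integrand hp hgm hg hz₀)
    (F' := fun z ω => I * ω * (((ω ^ p : ℝ) : ℂ) * g ω * cexp (I * ω * z)))
    (bound := fun ω => C * (ω ^ (p + 1) * Real.exp (-(z₀.im / 2 * ω))))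
    ((by fun_prop : Continuous fun ω : ℝ => I * ω).aestronglyMeasurable.mul
      (aestronglyMeasurable_laplaceIoi_integrand hgm z₀))
    ?_ ((integrableOn_rpow_mul_exp_neg_mul (by linarith) hε).const_mul C) ?_).2
    |>.differentiableAt.differentiableWithinAt
  · refine (ae_restrict_iff' measurableSet_Ioi).2 <| .of_forall fun ω (hω : 0 < ω) z hz => ?_
    rw [norm_mul, norm_mul, Complex.norm_I, one_mul, Complex.norm_real, Real.norm_eq_abs,
      abs_of_pos hω, Real.rpow_add_one hω.ne']
    calc ω * ‖((ω ^ p : ℝ) : ℂ) * g ω * cexp (I * ω * z)‖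
        ≤ ω * (C * (ω ^ p * Real.exp (-(z₀.im / 2 * ω)))) :=
          mul_le_mul_of_nonneg_left (norm_laplaceIoi_integrand_le hg hω.le (le_of_lt hz)) hω.le
      _ = C * (ω ^ p * ω * Real.exp (-(z₀.im / 2 * ω))) := by ring
  · refine .of_forall fun ω z _ => ?_
    have := (((hasDerivAt_id z).const_mul (I * ω)).cexp).const_mul (((ω ^ p : ℝ) : ℂ) * g ω)
    exact this.congr_deriv (by simp only [id, mul_one]; ring)

end LaplaceIoi

lemma cexp_I_mul_add_mul_I (ω x c : ℝ) :
    cexp (I * ω * (x + c * I)) = cexp (I * ω * x) * Real.exp (-(c * ω)) := by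
  rw [Complex.ofReal_exp, ← Complex.exp_add]
  congr 1
  push_cast
  linear_combination (c * ω : ℂ) * I_sq

lemma cauchyWavelet_eq_integral (a p : ℝ) (j : ℤ) :
    cauchyWavelet a p j = fun y : ℝ => ∫ ω in Ioi 0,
      1 / (2 * (π : ℂ)) * (((a ^ j * ω) ^ p * Real.exp (-(a ^ j * ω)) : ℝ) : ℂ) *
        cexp (I * ω * y) := by
  ext y
  rw [cauchyWavelet, ← integral_const_mul]
  simp only [Complex.ofReal_mul, mul_assoc]

theorem scaled_Fext_eq_conv_cauchyWavelet {p a : ℝ} (hp : -1 < p) (ha : 0 < a) {f : ℝ → ℂ}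
    (hf : Integrable f) (j : ℤ) (x : ℝ) :
    ((((a ^ j) ^ p : ℝ) : ℂ) / 2) * Fext p f ((x : ℂ) + (a ^ j : ℝ) * I) =
      conv f (cauchyWavelet a p j) x := by
  have hc : 0 < a ^ j := zpow_pos ha j
  rw [cauchyWavelet_eq_integral, conv_integral_mul_cexp _ hf, Fext, ← mul_assoc,
    ← integral_const_mul]
  · refine setIntegral_congr_fun measurableSet_Ioi fun ω (hω : 0 < ω) => ?_
    rw [cexp_I_mul_add_mul_I, Real.mul_rpow hc.le hω.le]
    push_cast
    ring
  · exact (integrableOn_mul_rpow_mul_exp_neg_mul hp hc).ofReal.const_mul _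

theorem stmt16_general (p a : ℝ) (hp : 0 < p) (ha : 1 < a) (f : ℝ → ℂ)
    (hf1 : Integrable f) :
    DifferentiableOn ℂ (Fext p f) {z : ℂ | 0 < z.im} ∧
    ∀ (j : ℤ) (x : ℝ),
      ((((a ^ j) ^ p : ℝ) : ℂ) / 2) * Fext p f ((x : ℂ) + (a ^ j : ℝ) * Complex.I) =
        conv f (cauchyWavelet a p j) x := by
  have hp' : -1 < p := by linarith
  have hf_bound (ω : ℝ) : ‖2 * fourierT f ω‖ ≤ 2 * ∫ x, ‖f x‖ := by
    rw [norm_mul, Complex.norm_two]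
    exact mul_le_mul_of_nonneg_left (norm_fourierT_le f ω) zero_le_two
  refine ⟨?_, scaled_Fext_eq_conv_cauchyWavelet hp' (by linarith) hf1⟩
  exact (differentiableOn_laplaceIoi hp'
    ((continuous_fourierT hf1).const_mul 2).aestronglyMeasurable hf_bound).const_mul _

/-- **The Cauchy wavelet transform is a holomorphic function sampled on horizontal
lines**: `F` is holomorphic on the upper half-plane and
`(a^{pj}/2) F(x + i a^j) = (f ⋆ ψ_j)(x)` for all `j ∈ ℤ`, `x ∈ ℝ`. -/
theorem stmt16 (p a : ℝ) (hp : 0 < p) (ha : 1 < a) (f : ℝ → ℂ)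
    (hf1 : Integrable f) (hf2 : MemLp f 2 (volume : Measure ℝ)) :
    DifferentiableOn ℂ (Fext p f) {z : ℂ | 0 < z.im} ∧
    ∀ (j : ℤ) (x : ℝ),
      ((((a ^ j) ^ p : ℝ) : ℂ) / 2) * Fext p f ((x : ℂ) + (a ^ j : ℝ) * Complex.I) =
        conv f (cauchyWavelet a p j) x :=
  stmt16_general p a hp ha f hf1
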